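/- arXiv:2102.05616 — 13 statements merged into one kernel-verified Lean document; each statement's English description precedes it below -/
import Mathlib

section
/- For every binary relation R on a set X, the relation R² equals the intersection of all maximal asymmetric sub-relations of R: for all x, y, one has x R² y if and only if x R' y holds for every relation R' that is a maximal element (with respect to inclusion) of the set of asymmetric sub-relations of R. -/
/-!
Zorn's lemma extends every asymmetric sub-relation of `R` to a maximal one. If `x R y` and
not `y R x`, the pair `(x, y)` can be added to any asymmetric sub-relation without breaking
asymmetry, so every maximal one contains it. Conversely, if `y R x` (with `x ≠ y`), a maximal
asymmetric sub-relation through `(y, x)` cannot contain `(x, y)`.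
-/

namespace Relation

variable {X : Type*}

def asymmSubrels (R : X → X → Prop) : Set (X → X → Prop) :=
  {S | S ≤ R ∧ ∀ a b, S a b → ¬ S b a}

variable {R : X → X → Prop}

theorem maximal_asymmSubrels_iff {M : X → X → Prop} :
    Maximal (· ∈ asymmSubrels R) M ↔
      (∀ a b, M a b → R a b) ∧ (∀ a b, M a b → ¬ M b a) ∧
        ∀ S : X → X → Prop, (∀ a b, S a b → R a b) → (∀ a b, S a b → ¬ S b a) →
          (∀ a b, M a b → S a b) → ∀ a b, S a b → M a b := by
  simp only [Maximal, asymmSubrels, Set.mem_ofPred_eq, and_assoc, and_imp]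
  rfl

theorem exists_maximal_asymmSubrels_ge {S : X → X → Prop} (hS : S ∈ asymmSubrels R) :
    ∃ M, S ≤ M ∧ Maximal (· ∈ asymmSubrels R) M := by
  refine zorn_le_nonempty₀ _ (fun c hc hchain _ _ => ?_) S hS
  refine ⟨fun a b => ∃ T ∈ c, T a b, ⟨?_, ?_⟩, fun T hT a b hab => ⟨T, hT, hab⟩⟩
  · rintro a b ⟨T, hT, hab⟩
    exact (hc hT).1 a b hab
  · rintro a b ⟨T, hT, hab⟩ ⟨U, hU, hba⟩
    rcases hchain.total hT hU with hTU | hUT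
    · exact (hc hU).2 a b (hTU a b hab) hba
    · exact (hc hT).2 a b hab (hUT b a hba)

theorem Maximal.asymmSubrels_apply {M : X → X → Prop} (hM : Maximal (· ∈ asymmSubrels R) M)
    {x y : X} (hxy : R x y) (hyx : ¬ R y x) : M x y := by
  have hne : x ≠ y := fun h => hyx (h ▸ hxy)
  let S : X → X → Prop := fun a b => M a b ∨ (a = x ∧ b = y)
  have hS : S ∈ asymmSubrels R := by
    refine ⟨?_, ?_⟩
    · rintro a b (hab | ⟨rfl, rfl⟩)
      exacts [hM.prop.1 a b hab, hxy]
    · rintro a b (hab | ⟨rfl, rfl⟩) (hba | ⟨hb, ha⟩)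
      · exact hM.prop.2 a b hab hba
      · subst hb ha; exact hyx (hM.prop.1 _ _ hab)
      · exact hyx (hM.prop.1 _ _ hba)
      · exact hne ha
  exact hM.le_of_ge hS (fun a b => Or.inl) x y (Or.inr ⟨rfl, rfl⟩)

theorem asymmKernel_of_forall_maximal {x y : X}
    (h : ∀ M, Maximal (· ∈ asymmSubrels R) M → M x y) : R x y ∧ ¬ R y x := by
  have hbot : (⊥ : X → X → Prop) ∈ asymmSubrels R := ⟨bot_le, fun _ _ h => h.elim⟩
  obtain ⟨M, -, hM⟩ := exists_maximal_asymmSubrels_ge hbot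
  have hne : x ≠ y := fun he => hM.prop.2 x y (h M hM) (he ▸ h M hM)
  refine ⟨hM.prop.1 x y (h M hM), fun hyx => ?_⟩
  let P : X → X → Prop := fun a b => a = y ∧ b = x
  have hP : P ∈ asymmSubrels R := by
    refine ⟨?_, ?_⟩
    · rintro a b ⟨rfl, rfl⟩
      exact hyx
    · rintro a b ⟨rfl, rfl⟩ ⟨he, -⟩
      exact hne he
  obtain ⟨N, hPN, hN⟩ := exists_maximal_asymmSubrels_ge hP
  exact hN.prop.2 x y (h N hN) (hPN y x ⟨rfl, rfl⟩)

end Relation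

open Relation in
/-- `R²` (defined by `x R² y ↔ x R y ∧ ¬ y R x`) equals the intersection of all
maximal asymmetric sub-relations of `R`. -/
theorem asymmetric_kernel_eq_inter_maximal {X : Type*} (R : X → X → Prop) (x y : X) :
    (R x y ∧ ¬ R y x) ↔
    (∀ R' : X → X → Prop,
      ((∀ a b, R' a b → R a b) ∧ (∀ a b, R' a b → ¬ R' b a) ∧
       (∀ S : X → X → Prop, (∀ a b, S a b → R a b) → (∀ a b, S a b → ¬ S b a) →
         (∀ a b, R' a b → S a b) → (∀ a b, S a b → R' a b))) →
      R' x y) := by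
  simp only [← maximal_asymmSubrels_iff]
  exact ⟨fun ⟨hxy, hyx⟩ M hM => hM.asymmSubrels_apply hxy hyx, asymmKernel_of_forall_maximal⟩
end

section
/- If a binary relation R on a set X is symmetric and satisfies semi-order property 2, then its complement Rᶜ is transitive. -/
/-- If `R` is symmetric and satisfies semi-order property 2, then its complement
is transitive. -/
theorem sym_semiOrd2_imp_complement_trans {X : Type*} (R : X → X → Prop)
    (hsym : ∀ x y, R x y → R y x)
    (hso2 : ∀ w x y z, R x y → R y z →
      (R w x ∨ R x w ∨ R w y ∨ R y w ∨ R w z ∨ R z w)) :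
    ∀ x y z, ¬ R x y → ¬ R y z → ¬ R x z := by
  intro x y z hxy hyz hxz
  have hyx : ¬ R y x := fun h => hxy (hsym y x h)
  have hzy : ¬ R z y := fun h => hyz (hsym z y h)
  -- By symmetry `x R z R x` is a chain, so property 2 relates `y` to `x` or `z`.
  rcases hso2 y x z x hxz (hsym x z hxz) with h | h | h | h | h | h <;> contradiction
end

section
/- If a binary relation R on a set X is symmetric and satisfies semi-order property 1, then its complement Rᶜ also satisfies semi-order property 1. -/
/-- If `R` is symmetric and satisfies semi-order property 1, then its complement
also satisfies semi-order property 1. -/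
theorem sym_semiOrd1_imp_complement_semiOrd1 {X : Type*} (R : X → X → Prop)
    (hsym : ∀ x y, R x y → R y x)
    (hso1 : ∀ w x y z, R w x → ¬ R x y → ¬ R y x → R y z → R w z) :
    ∀ w x y z, ¬ R w x → ¬ (¬ R x y) → ¬ (¬ R y x) → ¬ R y z → ¬ R w z := by
  intro w x y z hwx _ hyx hyz hwz
  have hxw : ¬ R x w := fun hxw => hwx (hsym x w hxw)
  -- If `w R z`, property 1 of `R` along `y R x`, `x ≁ w`, `w R z` would give `y R z`.
  exact hyz (hso1 y x w z (not_not.mp hyx) hxw hwx hwz)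
end

section
/- A binary relation R on a set X is symmetric if and only if the relation R⁶ is transitive. -/
section

variable {X : Type*} {R : X → X → Prop}

theorem Std.Symm.not_xor_swap [Std.Symm R] (x y : X) : ¬Xor (R x y) (R y x) := by
  rintro (⟨hxy, hnyx⟩ | ⟨hyx, hnxy⟩)
  exacts [hnyx (Std.Symm.symm _ _ hxy), hnxy (Std.Symm.symm _ _ hyx)]

/-- `Xor (R x y) (R y x)` is symmetric in `x, y` and irreflexive, so if it is transitive it is
empty: a pair `x, y` in it would give `x` related to itself. -/
theorem Std.Symm.of_isTrans_xor_swap [htrans : IsTrans X fun x y => Xor (R x y) (R y x)] :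
    Std.Symm R := by
  refine ⟨fun x y hxy => ?_⟩
  by_contra hnyx
  have hxy' : Xor (R x y) (R y x) := .inl ⟨hxy, hnyx⟩
  have hyx' : Xor (R y x) (R x y) := xor_comm (R x y) _ ▸ hxy'
  simpa using htrans.trans x y x hxy' hyx'

theorem symm_iff_isTrans_xor_swap : Std.Symm R ↔ IsTrans X fun x y => Xor (R x y) (R y x) :=
  ⟨fun _ => ⟨fun _ _ _ hxy _ => (Std.Symm.not_xor_swap _ _ hxy).elim⟩,
    fun _ => .of_isTrans_xor_swap⟩

end

/-- `R` is symmetric iff `R⁶` (exactly one of `x R y`, `y R x`) is transitive. -/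
theorem symmetric_iff_r6_transitive {X : Type*} (R : X → X → Prop) :
    (∀ x y, R x y → R y x) ↔
    (∀ x y z, ((R x y ∧ ¬ R y x) ∨ (R y x ∧ ¬ R x y)) →
      ((R y z ∧ ¬ R z y) ∨ (R z y ∧ ¬ R y z)) →
      ((R x z ∧ ¬ R z x) ∨ (R z x ∧ ¬ R x z))) :=
  ⟨fun h => (symm_iff_isTrans_xor_swap.mp ⟨h⟩).1,
    fun h => (symm_iff_isTrans_xor_swap.mpr ⟨h⟩).1⟩
end

section
/- A binary relation R on a set X is symmetric if and only if the relation R⁹ satisfies semi-order property 2. -/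
/-- `R` is symmetric iff `R⁹` (defined by `x R⁹ y ↔ (x R y ↔ y R x)`) satisfies
semi-order property 2. -/
theorem symmetric_iff_r9_semiOrd2 {X : Type*} (R : X → X → Prop) :
    (∀ x y, R x y → R y x) ↔
    (∀ w x y z, (R x y ↔ R y x) → (R y z ↔ R z y) →
      ((R w x ↔ R x w) ∨ (R x w ↔ R w x) ∨ (R w y ↔ R y w) ∨ (R y w ↔ R w y) ∨
       (R w z ↔ R z w) ∨ (R z w ↔ R w z))) := by
  constructor
  · intro hsymm w x _ _ _ _
    exact Or.inl ⟨hsymm w x, hsymm x w⟩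
  · intro hsemi x y hxy
    -- With `y = z = y`, both premises are trivial and every disjunct says `R x y ↔ R y x`.
    have hswap : R x y ↔ R y x := by
      rcases hsemi x y y y Iff.rfl Iff.rfl with h | h | h | h | h | h <;>
        first | exact h | exact h.symm
    exact hswap.mp hxy
end

section
/- If a binary relation R on a set X is left Euclidean, then the relation R⁶ is anti-transitive. -/
/-!
If `x R y` and `y R z`, left Euclideanity gives first `y R y` and then `y R x`; so the strict
part of `R` has no path of length two. Every orientation of a triangle contains such a path,
hence no three points can be pairwise `R⁶`-related.
-/

def IsLeftEuclidean {X : Type*} (R : X → X → Prop) : Prop :=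
  ∀ x y z, R y x → R z x → R y z

namespace IsLeftEuclidean

variable {X : Type*} {R : X → X → Prop}

theorem rel_of_rel_of_rel (hR : IsLeftEuclidean R) {x y z : X} (hxy : R x y) (hyz : R y z) :
    R y x :=
  hR y y x (hR z y y hyz hyz) hxy

theorem false_of_asymm_chain (hR : IsLeftEuclidean R) {x y z : X} (hxy : R x y ∧ ¬ R y x)
    (hyz : R y z ∧ ¬ R z y) : False :=
  hxy.2 (hR.rel_of_rel_of_rel hxy.1 hyz.1)

end IsLeftEuclidean

/-- If `R` is left Euclidean, then `R⁶` (exactly one of `x R y`, `y R x`) is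
anti-transitive. -/
theorem leftEuclidean_imp_r6_antitransitive {X : Type*} (R : X → X → Prop)
    (hle : ∀ x y z, R y x → R z x → R y z) :
    ∀ x y z, ((R x y ∧ ¬ R y x) ∨ (R y x ∧ ¬ R x y)) →
      ((R y z ∧ ¬ R z y) ∨ (R z y ∧ ¬ R y z)) →
      ¬ ((R x z ∧ ¬ R z x) ∨ (R z x ∧ ¬ R x z)) := by
  have hR : IsLeftEuclidean R := hle
  intro x y z hxy hyz hxz
  rcases hxy with hxy | hyx <;> rcases hyz with hyz | hzy
  · exact hR.false_of_asymm_chain hxy hyz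
  · rcases hxz with hxz | hzx
    · exact hR.false_of_asymm_chain hxz hzy
    · exact hR.false_of_asymm_chain hzx hxy
  · rcases hxz with hxz | hzx
    · exact hR.false_of_asymm_chain hyx hxz
    · exact hR.false_of_asymm_chain hyz hzx
  · exact hR.false_of_asymm_chain hzy hyx
end

section
/- If a set X contains at least 4 pairwise distinct elements, then no binary relation R on X is both anti-transitive and such that its incomparability relation R⁸ is left-unique. -/
/-!
An anti-transitive relation is irreflexive, so `IncompRel R y y` holds for every `y`; left-uniqueness
of `IncompRel R` then forces any two distinct elements to be comparable. For a relation that is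
both anti-transitive and comparable on distinct elements, two `R`-successors `y`, `z` of `x` must
coincide (otherwise `R y z` or `R z y` closes a forbidden triangle), and likewise two
`R`-predecessors. Hence every element is comparable with at most two others, one on each side,
which is impossible once there are four distinct elements.
-/

section AntiTransitive

variable {X : Type*} {R : X → X → Prop}

def AntiTransitive (R : X → X → Prop) : Prop :=
  ∀ ⦃x y z⦄, R x y → R y z → ¬ R x z

theorem AntiTransitive.irrefl (hR : AntiTransitive R) (x : X) : ¬ R x x :=
  fun hx => hR hx hx hx

theorem comparable_of_leftUnique_incompRel (hirr : ∀ x, ¬ R x x)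
    (hlu : Relator.LeftUnique (IncompRel R)) {x y : X} (hxy : x ≠ y) : R x y ∨ R y x := by
  by_contra hxy'
  exact hxy (hlu (not_or.mp hxy') ⟨hirr y, hirr y⟩)

variable (hR : AntiTransitive R) (hcon : ∀ ⦃x y : X⦄, x ≠ y → R x y ∨ R y x)
include hR hcon

theorem AntiTransitive.eq_of_rel_of_rel {x y z : X} (hy : R x y) (hz : R x z) : y = z := by
  by_contra hyz
  rcases hcon hyz with h | h
  · exact hR hy h hz
  · exact hR hz h hy

theorem AntiTransitive.eq_of_rel_of_rel' {x y z : X} (hy : R y x) (hz : R z x) : y = z := by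
  by_contra hyz
  rcases hcon hyz with h | h
  · exact hR h hz hy
  · exact hR h hy hz

theorem AntiTransitive.eq_or_eq_or_eq_of_comparable {x y z w : X} (hy : R x y ∨ R y x)
    (hz : R x z ∨ R z x) (hw : R x w ∨ R w x) : y = z ∨ y = w ∨ z = w := by
  have succ : ∀ {u v}, R x u → R x v → u = v := hR.eq_of_rel_of_rel hcon
  have pred : ∀ {u v}, R u x → R v x → u = v := hR.eq_of_rel_of_rel' hcon
  rcases hy with hy | hy <;> rcases hz with hz | hz <;> rcases hw with hw | hw <;>
    grind

end AntiTransitive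

/-- On a set with at least 4 pairwise distinct elements, no relation is both
anti-transitive and such that its incomparability relation `R⁸` is left-unique. -/
theorem no_antitrans_and_r8_leftUnique {X : Type*}
    (h4 : ∃ a b c d : X, a ≠ b ∧ a ≠ c ∧ a ≠ d ∧ b ≠ c ∧ b ≠ d ∧ c ≠ d)
    (R : X → X → Prop) :
    ¬ ((∀ x y z, R x y → R y z → ¬ R x z) ∧
       (∀ x₁ x₂ y, (¬ R x₁ y ∧ ¬ R y x₁) → (¬ R x₂ y ∧ ¬ R y x₂) → x₁ = x₂)) := by
  rintro ⟨hanti, hlu⟩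
  obtain ⟨a, b, c, d, hab, hac, had, hbc, hbd, hcd⟩ := h4
  have hR : AntiTransitive R := fun x y z => hanti x y z
  have hcon : ∀ ⦃x y : X⦄, x ≠ y → R x y ∨ R y x :=
    fun _ _ => comparable_of_leftUnique_incompRel hR.irrefl (fun x₁ x₂ y => hlu x₁ x₂ y)
  rcases hR.eq_or_eq_or_eq_of_comparable hcon (hcon hab) (hcon hac) (hcon had) with h | h | h
  exacts [hbc h, hbd h, hcd h]
end

section
/- If a set X contains at least 4 pairwise distinct elements, R is a binary relation on X that is left-unique, and the incomparability relation R⁸ is transitive, then the relation R⁶ is anti-transitive. -/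
/-!
If `R⁶` held on all three sides of a triangle `x, y, z`, the triangle would be a directed 3-cycle
of `R`: two of its edges with a common target contradict left-uniqueness. A fourth point `w` has
no `R`-edge into such a cycle (each vertex already has its unique `R`-predecessor) and at most one
`R`-edge from it, so `w` is incomparable with two vertices of the cycle; transitivity of `R⁸` then
makes those two vertices incomparable, although they are joined by an edge of the cycle.
-/

lemma exists_ne_ne_ne_of_four_distinct {X : Type*}
    (h4 : ∃ a b c d : X, a ≠ b ∧ a ≠ c ∧ a ≠ d ∧ b ≠ c ∧ b ≠ d ∧ c ≠ d) (x y z : X) :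
    ∃ w, w ≠ x ∧ w ≠ y ∧ w ≠ z := by
  classical
  obtain ⟨a, b, c, d, hab, hac, had, hbc, hbd, hcd⟩ := h4
  by_contra! h
  have hsub : ({a, b, c, d} : Finset X) ⊆ {x, y, z} := fun w _ ↦ by
    simp only [Finset.mem_insert, Finset.mem_singleton]
    tauto
  have hcard : ({a, b, c, d} : Finset X).card = 4 := by
    simp [Finset.card_insert_of_notMem, *]
  have := (Finset.card_le_card hsub).trans Finset.card_le_three
  omega

section

variable {X : Type*} {R : X → X → Prop}

lemma ne_of_xor_rel {a b : X} (h : Xor (R a b) (R b a)) : a ≠ b := by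
  rintro rfl
  simp at h

lemma Relator.LeftUnique.not_xor_of_rel_of_rel (hR : Relator.LeftUnique R) {a b c : X}
    (ha : R a c) (hb : R b c) : ¬ Xor (R a b) (R b a) := by
  obtain rfl := hR ha hb
  simp

lemma Relator.LeftUnique.not_rel_cycle_three (hR : Relator.LeftUnique R)
    [IsTrans X (IncompRel R)] {x y z w : X}
    (hxy : x ≠ y) (hyz : y ≠ z) (hxz : x ≠ z) (hwx : w ≠ x) (hwy : w ≠ y) (hwz : w ≠ z)
    (h₁ : R x y) (h₂ : R y z) (h₃ : R z x) : False := by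
  have hwx' : ¬ R w x := fun h ↦ hwz (hR h h₃)
  have hwy' : ¬ R w y := fun h ↦ hwx (hR h h₁)
  have hwz' : ¬ R w z := fun h ↦ hwy (hR h h₂)
  by_cases hxw : R x w
  · have hyw : ¬ R y w := fun h ↦ hxy (hR hxw h)
    have hzw : ¬ R z w := fun h ↦ hxz (hR hxw h)
    exact (trans_of (IncompRel R) ⟨hyw, hwy'⟩ ⟨hwz', hzw⟩).1 h₂
  · have hyw : R y w := by_contra fun hyw ↦
      (trans_of (IncompRel R) ⟨hxw, hwx'⟩ ⟨hwy', hyw⟩).1 h₁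
    have hzw : R z w := by_contra fun hzw ↦
      (trans_of (IncompRel R) ⟨hxw, hwx'⟩ ⟨hwz', hzw⟩).2 h₃
    exact hyz (hR hyw hzw)

end

/-- On a set with at least 4 pairwise distinct elements, if `R` is left-unique and
`R⁸` is transitive, then `R⁶` is anti-transitive. -/
theorem leftUnique_r8trans_imp_r6_antitrans {X : Type*}
    (h4 : ∃ a b c d : X, a ≠ b ∧ a ≠ c ∧ a ≠ d ∧ b ≠ c ∧ b ≠ d ∧ c ≠ d)
    (R : X → X → Prop)
    (hlu : ∀ x₁ x₂ y, R x₁ y → R x₂ y → x₁ = x₂)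
    (h8tr : ∀ x y z, (¬ R x y ∧ ¬ R y x) → (¬ R y z ∧ ¬ R z y) →
      (¬ R x z ∧ ¬ R z x)) :
    ∀ x y z, ((R x y ∧ ¬ R y x) ∨ (R y x ∧ ¬ R x y)) →
      ((R y z ∧ ¬ R z y) ∨ (R z y ∧ ¬ R y z)) →
      ¬ ((R x z ∧ ¬ R z x) ∨ (R z x ∧ ¬ R x z)) := by
  have hR : Relator.LeftUnique R := fun a b c ↦ hlu a b c
  have : IsTrans X (IncompRel R) := ⟨fun a b c ↦ h8tr a b c⟩
  intro x y z (hxy : Xor (R x y) (R y x)) (hyz : Xor (R y z) (R z y)) (hxz : Xor (R x z) (R z x))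
  obtain ⟨w, hwx, hwy, hwz⟩ := exists_ne_ne_ne_of_four_distinct h4 x y z
  have nxy := ne_of_xor_rel hxy
  have nyz := ne_of_xor_rel hyz
  have nxz := ne_of_xor_rel hxz
  rcases hxy.or with h₁ | h₁ <;> rcases hyz.or with h₂ | h₂ <;> rcases hxz.or with h₃ | h₃
  · exact hR.not_xor_of_rel_of_rel h₃ h₂ hxy
  · exact hR.not_rel_cycle_three nxy nyz nxz hwx hwy hwz h₁ h₂ h₃
  · exact hR.not_xor_of_rel_of_rel h₁ h₂ hxz
  · exact hR.not_xor_of_rel_of_rel h₁ h₂ hxz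
  · exact hR.not_xor_of_rel_of_rel h₃ h₂ hxy
  · exact hR.not_xor_of_rel_of_rel h₁ h₃ hyz
  · exact hR.not_rel_cycle_three nxz nyz.symm nxy hwx hwz hwy h₃ h₂ h₁
  · exact hR.not_xor_of_rel_of_rel h₁ h₃ hyz
end

section
/- If a set X contains at least 5 pairwise distinct elements and R is a binary relation on X that is left-unique and satisfies semi-order property 2, then the asymmetric kernel R² satisfies semi-order property 2. -/
/-!
Let `x R² y R² z` and apply semi-order property 2 of `R` to `w` and the chain `x R y R z`.
An `R`-edge between `w` and the chain is an `R²`-edge unless it is one half of a 2-cycle, and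
left-uniqueness rules out the 2-cycles that matter: a 2-cycle `a R b R a` must share a vertex with
every other `R`-edge, because semi-order property 2 applied to the chain `a R b R a` relates it to
that edge, and left-uniqueness turns each such relation into an equality of vertices.
-/

open Relator

section

variable {X : Type*}

def SemiOrderProperty2 (R : X → X → Prop) : Prop :=
  ∀ w x y z, R x y → R y z → (R w x ∨ R x w ∨ R w y ∨ R y w ∨ R w z ∨ R z w)

def asymmKernel (R : X → X → Prop) (x y : X) : Prop := R x y ∧ ¬ R y x

variable {R : X → X → Prop}

theorem SemiOrderProperty2.eq_or_eq_of_two_cycle (hlu : LeftUnique R)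
    (hso : SemiOrderProperty2 R) {a b c d : X} (hab : R a b) (hba : R b a) (hcd : R c d) :
    c = a ∨ c = b ∨ d = a ∨ d = b := by
  rcases hso d a b a hab hba with h | h | h | h | h | h
  · exact .inr <| .inr <| .inr (hlu h hba)
  · exact .inl (hlu h hcd).symm
  · exact .inr <| .inr <| .inl (hlu h hab)
  · exact .inr <| .inl (hlu h hcd).symm
  · exact .inr <| .inr <| .inr (hlu h hba)
  · exact .inl (hlu h hcd).symm

theorem semiOrderProperty2_asymmKernel (hlu : LeftUnique R) (hso : SemiOrderProperty2 R) :
    SemiOrderProperty2 (asymmKernel R) := by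
  rintro w x y z ⟨hxy, hyx⟩ ⟨hyz, hzy⟩
  have of_two_cycle (hwx : R w x) (hxw : R x w) :
      asymmKernel R w x ∨ asymmKernel R x w ∨ asymmKernel R w y ∨ asymmKernel R y w ∨
        asymmKernel R w z ∨ asymmKernel R z w := by
    rcases hso.eq_or_eq_of_two_cycle hlu hwx hxw hyz with rfl | rfl | rfl | rfl
    · exact .inr <| .inr <| .inr <| .inr <| .inl ⟨hyz, hzy⟩
    · exact absurd hxy hyx
    · exact .inr <| .inr <| .inr <| .inl ⟨hyz, hzy⟩
    · exact absurd hyz hyx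
  rcases hso w x y z hxy hyz with h | h | h | h | h | h
  · by_cases hxw : R x w
    · exact of_two_cycle h hxw
    · exact .inl ⟨h, hxw⟩
  · by_cases hwx : R w x
    · exact of_two_cycle hwx h
    · exact .inr <| .inl ⟨h, hwx⟩
  · obtain rfl := hlu h hxy
    exact .inr <| .inr <| .inl ⟨h, hyx⟩
  · exact .inr <| .inr <| .inr <| .inl ⟨h, fun hwy => hyx (hlu hwy hxy ▸ h)⟩
  · obtain rfl := hlu h hyz
    exact .inr <| .inr <| .inr <| .inr <| .inl ⟨h, hzy⟩
  · exact .inr <| .inr <| .inr <| .inr <| .inr ⟨h, fun hwz => hzy (hlu hwz hyz ▸ h)⟩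

end

theorem leftUnique_semiOrd2_imp_r2_semiOrd2_general {X : Type*}
    (R : X → X → Prop)
    (hlu : ∀ x₁ x₂ y, R x₁ y → R x₂ y → x₁ = x₂)
    (hso2 : ∀ w x y z, R x y → R y z →
      (R w x ∨ R x w ∨ R w y ∨ R y w ∨ R w z ∨ R z w)) :
    ∀ w x y z, (R x y ∧ ¬ R y x) → (R y z ∧ ¬ R z y) →
      ((R w x ∧ ¬ R x w) ∨ (R x w ∧ ¬ R w x) ∨ (R w y ∧ ¬ R y w) ∨
       (R y w ∧ ¬ R w y) ∨ (R w z ∧ ¬ R z w) ∨ (R z w ∧ ¬ R w z)) :=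
  semiOrderProperty2_asymmKernel (fun _ _ _ => hlu _ _ _) hso2

/-- On a set with at least 5 pairwise distinct elements, if `R` is left-unique and
satisfies semi-order property 2, then `R²` satisfies semi-order property 2. -/
theorem leftUnique_semiOrd2_imp_r2_semiOrd2 {X : Type*}
    (h5 : ∃ a b c d e : X, a ≠ b ∧ a ≠ c ∧ a ≠ d ∧ a ≠ e ∧ b ≠ c ∧ b ≠ d ∧
      b ≠ e ∧ c ≠ d ∧ c ≠ e ∧ d ≠ e)
    (R : X → X → Prop)
    (hlu : ∀ x₁ x₂ y, R x₁ y → R x₂ y → x₁ = x₂)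
    (hso2 : ∀ w x y z, R x y → R y z →
      (R w x ∨ R x w ∨ R w y ∨ R y w ∨ R w z ∨ R z w)) :
    ∀ w x y z, (R x y ∧ ¬ R y x) → (R y z ∧ ¬ R z y) →
      ((R w x ∧ ¬ R x w) ∨ (R x w ∧ ¬ R w x) ∨ (R w y ∧ ¬ R y w) ∨
       (R y w ∧ ¬ R w y) ∨ (R w z ∧ ¬ R z w) ∨ (R z w ∧ ¬ R w z)) :=
  leftUnique_semiOrd2_imp_r2_semiOrd2_general R hlu hso2
end

section
/- If a set X contains at least 5 pairwise distinct elements, R is a binary relation on X that is left-unique, and the relation R⁴ is left-unique, then the incomparability relation R⁸ is dense. -/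
/-!
Every element comparable with `x` is either an `R`-predecessor of `x` or an `R⁴`-successor
of `x`, and left-uniqueness of `R` and of `R⁴` allows at most one of each. So at most two
elements are comparable with `x`, and at most two with `z`; with five elements available, one
of them is incomparable with both.
-/

namespace Set

theorem encard_eq_five_of_pairwise_ne {X : Type*} {a b c d e : X}
    (h : a ≠ b ∧ a ≠ c ∧ a ≠ d ∧ a ≠ e ∧ b ≠ c ∧ b ≠ d ∧ b ≠ e ∧ c ≠ d ∧ c ≠ e ∧ d ≠ e) :
    ({a, b, c, d, e} : Set X).encard = 5 := by
  obtain ⟨hab, hac, had, hae, hbc, hbd, hbe, hcd, hce, hde⟩ := h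
  rw [encard_insert_of_notMem (by simp [*]), encard_insert_of_notMem (by simp [*]),
    encard_insert_of_notMem (by simp [*]), encard_pair hde]
  norm_num

end Set

section Comparable

variable {X : Type*} (R : X → X → Prop)

theorem encard_setOf_comparable_le_two
    (hlu : ∀ x₁ x₂ y, R x₁ y → R x₂ y → x₁ = x₂)
    (hlu4 : ∀ x₁ x₂ y, (R y x₁ ∧ ¬ R x₁ y) → (R y x₂ ∧ ¬ R x₂ y) → x₁ = x₂) (x : X) :
    {y | R x y ∨ R y x}.encard ≤ 2 := by
  have hsplit : {y | R x y ∨ R y x} ⊆ {y | R y x} ∪ {y | R x y ∧ ¬ R y x} := by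
    intro y hy
    by_cases hyx : R y x
    · exact Or.inl hyx
    · exact Or.inr ⟨hy.resolve_right hyx, hyx⟩
  calc {y | R x y ∨ R y x}.encard
      ≤ ({y | R y x} ∪ {y | R x y ∧ ¬ R y x}).encard := Set.encard_le_encard hsplit
    _ ≤ {y | R y x}.encard + {y | R x y ∧ ¬ R y x}.encard := Set.encard_union_le _ _
    _ ≤ 1 + 1 := add_le_add (Set.encard_le_one_iff.2 fun _ _ => hlu _ _ x)
        (Set.encard_le_one_iff.2 fun _ _ => hlu4 _ _ x)
    _ = 2 := by norm_num

end Comparable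

/-- On a set with at least 5 pairwise distinct elements, if `R` and `R⁴` (defined by
`x R⁴ y ↔ y R x ∧ ¬ x R y`) are left-unique, then `R⁸` is dense. -/
theorem leftUnique_r4_leftUnique_imp_r8_dense {X : Type*}
    (h5 : ∃ a b c d e : X, a ≠ b ∧ a ≠ c ∧ a ≠ d ∧ a ≠ e ∧ b ≠ c ∧ b ≠ d ∧
      b ≠ e ∧ c ≠ d ∧ c ≠ e ∧ d ≠ e)
    (R : X → X → Prop)
    (hlu : ∀ x₁ x₂ y, R x₁ y → R x₂ y → x₁ = x₂)
    (hlu4 : ∀ x₁ x₂ y, (R y x₁ ∧ ¬ R x₁ y) → (R y x₂ ∧ ¬ R x₂ y) → x₁ = x₂) :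
    ∀ x z, (¬ R x z ∧ ¬ R z x) →
      ∃ y, (¬ R x y ∧ ¬ R y x) ∧ (¬ R y z ∧ ¬ R z y) := by
  intro x z _
  by_contra hnone
  obtain ⟨a, b, c, d, e, hne⟩ := h5
  have hcover : (Set.univ : Set X) ⊆ {y | R x y ∨ R y x} ∪ {y | R z y ∨ R y z} := by
    intro y _
    by_contra hy
    simp only [Set.mem_union, Set.mem_ofPred_eq, not_or] at hy
    exact hnone ⟨y, hy.1, hy.2.2, hy.2.1⟩
  have hfive : (5 : ℕ∞) ≤ (Set.univ : Set X).encard :=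
    (Set.encard_eq_five_of_pairwise_ne hne).symm.le.trans
      (Set.encard_le_encard (Set.subset_univ _))
  have hfour : (Set.univ : Set X).encard ≤ 4 :=
    calc (Set.univ : Set X).encard
        ≤ {y | R x y ∨ R y x}.encard + {y | R z y ∨ R y z}.encard :=
          (Set.encard_le_encard hcover).trans (Set.encard_union_le _ _)
      _ ≤ 2 + 2 := add_le_add (encard_setOf_comparable_le_two R hlu hlu4 x)
          (encard_setOf_comparable_le_two R hlu hlu4 z)
      _ = 4 := by norm_num
  exact absurd (hfive.trans hfour) (by norm_num)
end

section
/- If a set X contains at least 5 pairwise distinct elements, and both the symmetric kernel R¹ and the incomparability relation R⁸ of a binary relation R on X are left-unique, then the relation R⁶ is dense. -/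
/-!
Writing `R⁶` as `Xor (R a b) (R b a)`, two elements fail to be `R⁶`-related exactly when they are
`R¹`- or `R⁸`-related. Left-uniqueness of `R¹` and `R⁸` thus leaves every element with at most
two non-`R⁶`-neighbours, so for any `x` and `z` at most four elements are excluded, and a fifth
element is an `R⁶`-neighbour of both.
-/

open Set

theorem Relator.LeftUnique.encard_setOf_le_one {α : Type*} {r : α → α → Prop}
    (hr : Relator.LeftUnique r) (b : α) : {a | r a b}.encard ≤ 1 :=
  encard_le_one_iff_subsingleton.mpr fun _ ha _ ha' => hr ha ha'

theorem Set.exists_mem_notMem_union_of_encard_add_lt {α : Type*} {s t u : Set α}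
    (h : t.encard + u.encard < s.encard) : ∃ a ∈ s, a ∉ t ∧ a ∉ u := by
  by_contra! hsub
  have hs : s ⊆ t ∪ u := fun a ha => or_iff_not_imp_left.mpr (hsub a ha)
  exact ((encard_le_encard hs).trans (encard_union_le t u)).not_gt h

section

variable {X : Type*} {R : X → X → Prop}

theorem not_xor_iff_antisymmRel_or_incompRel {a b : X} :
    ¬ Xor (R a b) (R b a) ↔ AntisymmRel R a b ∨ IncompRel R a b := by
  rw [xor_def]
  unfold AntisymmRel IncompRel
  tauto

theorem encard_setOf_not_xor_le_two (h1 : Relator.LeftUnique (AntisymmRel R))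
    (h8 : Relator.LeftUnique (IncompRel R)) (b : X) :
    {a | ¬ Xor (R a b) (R b a)}.encard ≤ 2 :=
  calc {a | ¬ Xor (R a b) (R b a)}.encard
      = ({a | AntisymmRel R a b} ∪ {a | IncompRel R a b}).encard := by
        simp only [ofPred_or, not_xor_iff_antisymmRel_or_incompRel]
    _ ≤ 1 + 1 := (encard_union_le _ _).trans
        (add_le_add (h1.encard_setOf_le_one b) (h8.encard_setOf_le_one b))
    _ = 2 := one_add_one_eq_two

theorem exists_xor_xor_of_five_le_encard (h5 : 5 ≤ (univ : Set X).encard)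
    (h1 : Relator.LeftUnique (AntisymmRel R)) (h8 : Relator.LeftUnique (IncompRel R))
    (x z : X) : ∃ y, Xor (R x y) (R y x) ∧ Xor (R y z) (R z y) := by
  have hlt : {a | ¬ Xor (R a x) (R x a)}.encard + {a | ¬ Xor (R a z) (R z a)}.encard
      < (univ : Set X).encard :=
    calc _ ≤ 2 + 2 :=
          add_le_add (encard_setOf_not_xor_le_two h1 h8 x) (encard_setOf_not_xor_le_two h1 h8 z)
      _ < 5 := by norm_num
      _ ≤ _ := h5
  obtain ⟨y, -, hx, hz⟩ := exists_mem_notMem_union_of_encard_add_lt hlt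
  exact ⟨y, xor_comm _ _ ▸ not_not.mp hx, not_not.mp hz⟩

end

/-- On a set with at least 5 pairwise distinct elements, if the symmetric kernel `R¹`
and the incomparability relation `R⁸` are left-unique, then `R⁶` is dense. -/
theorem r1_r8_leftUnique_imp_r6_dense {X : Type*}
    (h5 : ∃ a b c d e : X, a ≠ b ∧ a ≠ c ∧ a ≠ d ∧ a ≠ e ∧ b ≠ c ∧ b ≠ d ∧
      b ≠ e ∧ c ≠ d ∧ c ≠ e ∧ d ≠ e)
    (R : X → X → Prop)
    (hlu1 : ∀ x₁ x₂ y, (R x₁ y ∧ R y x₁) → (R x₂ y ∧ R y x₂) → x₁ = x₂)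
    (hlu8 : ∀ x₁ x₂ y, (¬ R x₁ y ∧ ¬ R y x₁) → (¬ R x₂ y ∧ ¬ R y x₂) → x₁ = x₂) :
    ∀ x z, ((R x z ∧ ¬ R z x) ∨ (R z x ∧ ¬ R x z)) →
      ∃ y, ((R x y ∧ ¬ R y x) ∨ (R y x ∧ ¬ R x y)) ∧
           ((R y z ∧ ¬ R z y) ∨ (R z y ∧ ¬ R y z)) := by
  obtain ⟨a, b, c, d, e, hab, hac, had, hae, hbc, hbd, hbe, hcd, hce, hde⟩ := h5
  have hfive : ({a, b, c, d, e} : Set X).encard = 5 := by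
    norm_num [encard_insert_of_notMem, *]
  intro x z _
  exact exists_xor_xor_of_five_le_encard (R := R) (hfive ▸ encard_le_encard (subset_univ _))
    (fun _ _ _ => hlu1 _ _ _) (fun _ _ _ => hlu8 _ _ _) x z
end

section
/- If a binary relation R on a set X and its complement Rᶜ both satisfy semi-order property 2, then the asymmetric kernel R² satisfies semi-order property 2. -/
/-!
If `R w w`, then property 2 for the chain `w R w R w` makes `w` `R`-comparable with every
point; if `¬ R w w`, the same argument for `Rᶜ` makes it `Rᶜ`-comparable with every point.
In the first case property 2 for `Rᶜ`, applied to the `Rᶜ`-chain `z, y, x`, gives a point among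
`x, y, z` that is `Rᶜ`-comparable with `w`; in the second, property 2 for `R` gives one that is
`R`-comparable with `w`. A point that is both `R`- and `Rᶜ`-comparable with `w` is related to `w`
by `R²` in one direction.
-/

section

variable {X : Type*}

def SemiorderProp2 (R : X → X → Prop) : Prop :=
  ∀ w x y z, R x y → R y z → R w x ∨ R x w ∨ R w y ∨ R y w ∨ R w z ∨ R z w

def AsymmKernel (R : X → X → Prop) (a b : X) : Prop := R a b ∧ ¬ R b a

theorem asymmKernel_or_of_comparable {R : X → X → Prop} {w v : X} (hR : R w v ∨ R v w)
    (hRc : ¬ R w v ∨ ¬ R v w) : AsymmKernel R w v ∨ AsymmKernel R v w := by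
  unfold AsymmKernel
  tauto

theorem semiorderProp2_iff_exists_mem {R : X → X → Prop} :
    SemiorderProp2 R ↔
      ∀ w x y z, R x y → R y z → ∃ v ∈ ({x, y, z} : Set X), R w v ∨ R v w := by
  simp only [SemiorderProp2, Set.mem_insert_iff, Set.mem_singleton_iff, exists_eq_or_imp,
    exists_eq_left, or_assoc]

namespace SemiorderProp2

variable {R : X → X → Prop}

theorem exists_mem_comparable (h : SemiorderProp2 R) (w : X) {x y z : X} (hxy : R x y)
    (hyz : R y z) : ∃ v ∈ ({x, y, z} : Set X), R w v ∨ R v w :=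
  semiorderProp2_iff_exists_mem.1 h w x y z hxy hyz

theorem comparable_of_refl (h : SemiorderProp2 R) {w : X} (hw : R w w) (v : X) :
    R w v ∨ R v w := by
  rcases h v w w w hw hw with hv | hv | hv | hv | hv | hv <;> tauto

theorem asymmKernel (h : SemiorderProp2 R) (hc : SemiorderProp2 Rᶜ) :
    SemiorderProp2 (AsymmKernel R) := by
  refine semiorderProp2_iff_exists_mem.2 fun w x y z hxy hyz => ?_
  by_cases hw : R w w
  · obtain ⟨v, hv, hRc⟩ := hc.exists_mem_comparable w hyz.2 hxy.2
    refine ⟨v, ?_, asymmKernel_or_of_comparable (h.comparable_of_refl hw v) hRc⟩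
    rwa [Set.insert_comm, Set.pair_comm, Set.insert_comm] at hv
  · obtain ⟨v, hv, hR⟩ := h.exists_mem_comparable w hxy.1 hyz.1
    exact ⟨v, hv, asymmKernel_or_of_comparable hR (hc.comparable_of_refl hw v)⟩

end SemiorderProp2

end

/-- If both `R` and its complement satisfy semi-order property 2, then `R²`
satisfies semi-order property 2. -/
theorem so2_and_complement_so2_imp_r2_so2 {X : Type*} (R : X → X → Prop)
    (hso2 : ∀ w x y z, R x y → R y z →
      (R w x ∨ R x w ∨ R w y ∨ R y w ∨ R w z ∨ R z w))
    (hso2c : ∀ w x y z, ¬ R x y → ¬ R y z →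
      (¬ R w x ∨ ¬ R x w ∨ ¬ R w y ∨ ¬ R y w ∨ ¬ R w z ∨ ¬ R z w)) :
    ∀ w x y z, (R x y ∧ ¬ R y x) → (R y z ∧ ¬ R z y) →
      ((R w x ∧ ¬ R x w) ∨ (R x w ∧ ¬ R w x) ∨ (R w y ∧ ¬ R y w) ∨
       (R y w ∧ ¬ R w y) ∨ (R w z ∧ ¬ R z w) ∨ (R z w ∧ ¬ R w z)) :=
  SemiorderProp2.asymmKernel (R := R) hso2 hso2c
end

section
/- If the asymmetric kernel R² of a binary relation R on a set X satisfies semi-order property 2 and the symmetric closure R⁷ is transitive, then the complement Rᶜ satisfies semi-order property 2. -/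
/-!
If `w` were `R`-related in both directions to each of `x`, `y`, `z`, transitivity of `R⁷`
through `w` would make `x`, `y`, `z` pairwise comparable, so `¬ x R y` and `¬ y R z` turn into
a strict chain `z R² y R² x`. Semi-order property 2 of `R²` then forces a strict relation between
`w` and one of `x`, `y`, `z`, which is impossible.
-/

theorem asymm_swap_of_not_rel_of_symmClosure_trans {X : Type*} {R : X → X → Prop}
    (h7tr : ∀ x y z, (R x y ∨ R y x) → (R y z ∨ R z y) → (R x z ∨ R z x))
    {w x y : X} (hyw : R y w) (hwx : R w x) (hxy : ¬ R x y) : R y x ∧ ¬ R x y :=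
  ⟨(h7tr y w x (Or.inl hyw) (Or.inl hwx)).resolve_right hxy, hxy⟩

/-- If `R²` satisfies semi-order property 2 and the symmetric closure `R⁷` is
transitive, then the complement `Rᶜ` satisfies semi-order property 2. -/
theorem r2_so2_r7_trans_imp_complement_so2 {X : Type*} (R : X → X → Prop)
    (hso2 : ∀ w x y z, (R x y ∧ ¬ R y x) → (R y z ∧ ¬ R z y) →
      ((R w x ∧ ¬ R x w) ∨ (R x w ∧ ¬ R w x) ∨ (R w y ∧ ¬ R y w) ∨
       (R y w ∧ ¬ R w y) ∨ (R w z ∧ ¬ R z w) ∨ (R z w ∧ ¬ R w z)))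
    (h7tr : ∀ x y z, (R x y ∨ R y x) → (R y z ∨ R z y) → (R x z ∨ R z x)) :
    ∀ w x y z, ¬ R x y → ¬ R y z →
      (¬ R w x ∨ ¬ R x w ∨ ¬ R w y ∨ ¬ R y w ∨ ¬ R w z ∨ ¬ R z w) := by
  intro w x y z hxy hyz
  by_contra! hw
  obtain ⟨hwx, hxw, hwy, hyw, hwz, hzw⟩ := hw
  have hzy := asymm_swap_of_not_rel_of_symmClosure_trans h7tr hzw hwy hyz
  have hyx := asymm_swap_of_not_rel_of_symmClosure_trans h7tr hyw hwx hxy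
  rcases hso2 w z y x hzy hyx with h | h | h | h | h | h <;> exact h.2 ‹_›
end
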